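/- If a_n ∈ ℝ and b_n → ∞ satisfy ∫₀^{2π}∫₀^L (e^{b_n L x sinθ (2a_n − L x sinθ)} − 1)·(x sinθ)^{−1} dx dθ = 0 for all n (with the integrand extended continuously where x sinθ = 0), and |a_n| ≤ L², then a_n → 0. -/

import Mathlib

/-!
Write `u = x sin θ`; the integrand is `g(u) = (e^{bLu(2a−Lu)} − 1)/u`. For `a > 0` and `b ≥ 0`,
`g ≥ −L/(2a)` everywhere (for `u > 0` the exponent is negative only when `u > 2a/L`), while
`g ≥ (e^{ba²/4} − 1)·L/a` on the rectangle `a/(2L) ≤ x ≤ a/L`, `π/6 ≤ θ ≤ π/2`. Comparing the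
areas, the integral is positive as soon as `e^{ba²/4} − 1 > 6L²/a`, which holds for all
`a ∈ [δ, L²]` once `b` is large. Replacing `a` by `−a` negates the integral (shift `θ` by `π`),
so `|a_n| ≥ δ` is impossible for large `n`.
-/

open Real Filter intervalIntegral

/-- The integrand `(e^{bLx sinθ(2a−Lx sinθ)}−1)/(x sinθ)`, extended by continuity
(with the conventional value `2ab`) where `x sinθ = 0`. -/
noncomputable def rodIntegrand (L b a x θ : ℝ) : ℝ :=
  if x * Real.sin θ = 0 then 2 * a * b
  else (Real.exp (b * L * x * Real.sin θ * (2 * a - L * x * Real.sin θ)) - 1) /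
    (x * Real.sin θ)

open Set MeasureTheory

theorem le_integral_of_neg_le_of_le_on_Icc {f : ℝ → ℝ} {p s t q C M : ℝ}
    (hps : p ≤ s) (hst : s ≤ t) (htq : t ≤ q) (hf : IntervalIntegrable f volume p q)
    (hC : ∀ x ∈ Icc p q, -C ≤ f x) (hM : ∀ x ∈ Icc s t, M ≤ f x) :
    (t - s) * (M + C) - (q - p) * C ≤ ∫ x in p..q, f x := by
  have hfC : IntervalIntegrable (fun x => f x + C) volume p q := hf.add intervalIntegrable_const
  have hsub : uIcc s t ⊆ uIcc p q := by
    rw [uIcc_of_le hst, uIcc_of_le (hps.trans (hst.trans htq))]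
    exact Icc_subset_Icc hps htq
  have h_inner : (t - s) * (M + C) ≤ ∫ x in s..t, (f x + C) := by
    have := integral_mono_on hst intervalIntegrable_const (hfC.mono_set hsub)
      fun x hx => (by linarith [hM x hx] : M + C ≤ f x + C)
    rwa [intervalIntegral.integral_const, smul_eq_mul] at this
  have h_outer : ∫ x in s..t, (f x + C) ≤ ∫ x in p..q, (f x + C) :=
    integral_mono_interval hps hst htq
      ((ae_restrict_iff' measurableSet_Ioc).2 (Eventually.of_forall fun x hx =>
        (by linarith [hC x (Ioc_subset_Icc_self hx)] : 0 ≤ f x + C))) hfC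
  rw [integral_add hf intervalIntegrable_const, intervalIntegral.integral_const,
    smul_eq_mul] at h_outer
  linarith

theorem Differentiable.continuous_dslope {𝕜 E : Type*} [NontriviallyNormedField 𝕜]
    [NormedAddCommGroup E] [NormedSpace 𝕜 E] {f : 𝕜 → E} (hf : Differentiable 𝕜 f) (a : 𝕜) :
    Continuous (dslope f a) :=
  continuous_iff_continuousAt.2 fun u => by
    rcases eq_or_ne u a with rfl | hu
    · exact continuousAt_dslope_same.2 (hf u)
    · exact (continuousAt_dslope_of_ne hu).2 (hf u).continuousAt

/-- `rodIntegrand L b a x θ` is the difference quotient of `rodPhase L b a` at `0`, evaluated at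
`u = x sin θ`; `dslope` gives its continuous extension, whose value `2abL` at `u = 0` differs from
the `2ab` of `rodIntegrand` only on a null set. -/
noncomputable def rodPhase (L b a u : ℝ) : ℝ := exp (b * L * u * (2 * a - L * u))

section rodPhase

variable {L b a : ℝ}

theorem continuous_dslope_rodPhase : Continuous (dslope (rodPhase L b a) 0) :=
  Differentiable.continuous_dslope (by unfold rodPhase; fun_prop) 0

theorem dslope_rodPhase_of_ne {u : ℝ} (hu : u ≠ 0) :
    dslope (rodPhase L b a) 0 u = (exp (b * L * u * (2 * a - L * u)) - 1) / u := by
  simp [dslope_of_ne _ hu, slope_def_field, rodPhase]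

theorem rodIntegrand_eq_dslope_rodPhase {x θ : ℝ} (h : x * sin θ ≠ 0) :
    rodIntegrand L b a x θ = dslope (rodPhase L b a) 0 (x * sin θ) := by
  rw [rodIntegrand, if_neg h, dslope_rodPhase_of_ne h]
  ring_nf

theorem neg_div_le_dslope_rodPhase (hL : 0 ≤ L) (hb : 0 ≤ b) (ha : 0 < a) (u : ℝ) :
    -(L / (2 * a)) ≤ dslope (rodPhase L b a) 0 u := by
  suffices h : ∀ u ≠ 0, -(L / (2 * a)) ≤ dslope (rodPhase L b a) 0 u by
    rcases eq_or_ne u 0 with rfl | hu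
    · exact ge_of_tendsto (continuous_dslope_rodPhase.tendsto 0 |>.mono_left nhdsWithin_le_nhds)
        (eventually_nhdsWithin_of_forall (s := {0}ᶜ) h)
    · exact h u hu
  intro u hu
  have hC : 0 ≤ L / (2 * a) := by positivity
  rw [dslope_rodPhase_of_ne hu]
  set t := b * L * u * (2 * a - L * u)
  rcases hu.lt_or_gt with hneg | hpos
  · have ht : t ≤ 0 := by
      have : 0 ≤ 2 * a - L * u := by nlinarith
      exact mul_nonpos_of_nonpos_of_nonneg
        (mul_nonpos_of_nonneg_of_nonpos (by positivity) hneg.le) this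
    have : 0 ≤ (exp t - 1) / u := div_nonneg_of_nonpos (by linarith [exp_le_one_iff.2 ht]) hneg.le
    linarith
  rcases le_or_gt (L * u) (2 * a) with hLu | hLu
  · have : 0 ≤ (exp t - 1) / u :=
      div_nonneg (by linarith [one_le_exp (by positivity : 0 ≤ t)]) hpos.le
    linarith
  · calc -(L / (2 * a)) ≤ -1 / u := by
          rw [neg_div, neg_le_neg_iff, div_le_div_iff₀ hpos (by positivity)]; linarith
      _ ≤ (exp t - 1) / u := by gcongr; linarith [exp_pos t]

theorem exp_sub_one_div_le_dslope_rodPhase (hb : 0 ≤ b) {u : ℝ} (hu : 0 < u)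
    (hLu : L * u ≤ a) (haLu : a ≤ 4 * (L * u)) :
    (exp (b * a ^ 2 / 4) - 1) / u ≤ dslope (rodPhase L b a) 0 u := by
  rw [dslope_rodPhase_of_ne hu.ne']
  have : a ^ 2 / 4 ≤ L * u * (2 * a - L * u) := by nlinarith
  gcongr
  calc b * a ^ 2 / 4 = b * (a ^ 2 / 4) := by ring
    _ ≤ b * (L * u * (2 * a - L * u)) := by gcongr
    _ = b * L * u * (2 * a - L * u) := by ring

end rodPhase

noncomputable def rodIntegral (L b a : ℝ) : ℝ :=
  ∫ x in (0 : ℝ)..L, ∫ θ in (0 : ℝ)..(2 * π), rodIntegrand L b a x θ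

section rodIntegral

variable {L b a : ℝ}

theorem integral_rodIntegrand_eq {x : ℝ} (hx : x ≠ 0) :
    ∫ θ in (0 : ℝ)..(2 * π), rodIntegrand L b a x θ
      = ∫ θ in (0 : ℝ)..(2 * π), dslope (rodPhase L b a) 0 (x * sin θ) := by
  have hzeros : {θ : ℝ | sin θ = 0}.Countable :=
    (countable_range fun n : ℤ => (n : ℝ) * π).mono fun θ hθ => sin_eq_zero_iff.1 hθ
  refine integral_congr_ae ?_
  filter_upwards [hzeros.ae_notMem volume] with θ hθ _
  exact rodIntegrand_eq_dslope_rodPhase (mul_ne_zero hx hθ)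

theorem rodIntegral_eq :
    rodIntegral L b a
      = ∫ x in (0 : ℝ)..L, ∫ θ in (0 : ℝ)..(2 * π), dslope (rodPhase L b a) 0 (x * sin θ) := by
  refine integral_congr_ae ?_
  filter_upwards [(countable_singleton (0 : ℝ)).ae_notMem volume] with x hx _
  exact integral_rodIntegrand_eq hx

theorem rodIntegrand_neg (x θ : ℝ) :
    rodIntegrand L b (-a) x θ = -rodIntegrand L b a x (θ + π) := by
  simp only [rodIntegrand, sin_add_pi, mul_neg, neg_eq_zero]
  split_ifs
  · ring
  · rw [div_neg, neg_neg]
    ring_nf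

theorem integral_rodIntegrand_neg (x : ℝ) :
    ∫ θ in (0 : ℝ)..(2 * π), rodIntegrand L b (-a) x θ
      = -∫ θ in (0 : ℝ)..(2 * π), rodIntegrand L b a x θ := by
  have hper : Function.Periodic (rodIntegrand L b a x) (2 * π) := fun θ => by
    simp only [rodIntegrand, sin_add_two_pi]
  simp_rw [rodIntegrand_neg, intervalIntegral.integral_neg]
  rw [integral_comp_add_right, zero_add, add_comm, hper.intervalIntegral_add_eq π 0, zero_add]

theorem rodIntegral_neg : rodIntegral L b (-a) = -rodIntegral L b a := by
  simp_rw [rodIntegral, integral_rodIntegrand_neg, intervalIntegral.integral_neg]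

theorem intervalIntegrable_dslope_rodPhase_mul_sin (x p q : ℝ) :
    IntervalIntegrable (fun θ => dslope (rodPhase L b a) 0 (x * sin θ)) volume p q :=
  (continuous_dslope_rodPhase.comp (by fun_prop)).intervalIntegrable p q

theorem neg_le_integral_dslope_rodPhase (hL : 0 ≤ L) (hb : 0 ≤ b) (ha : 0 < a) (x : ℝ) :
    -(π * (L / a)) ≤ ∫ θ in (0 : ℝ)..(2 * π), dslope (rodPhase L b a) 0 (x * sin θ) := by
  have := integral_mono_on (show (0 : ℝ) ≤ 2 * π by positivity)
    (intervalIntegrable_const (μ := volume)) (intervalIntegrable_dslope_rodPhase_mul_sin x _ _)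
    fun θ _ => neg_div_le_dslope_rodPhase hL hb ha (x * sin θ)
  rw [intervalIntegral.integral_const, smul_eq_mul] at this
  convert this using 1
  field_simp
  ring

theorem le_integral_dslope_rodPhase (hL : 0 < L) (hb : 0 ≤ b) (ha : 0 < a) {x : ℝ}
    (hx : x ∈ Icc (a / (2 * L)) (a / L)) :
    π / 3 * ((exp (b * a ^ 2 / 4) - 1) * (L / a)) - π * (L / a)
      ≤ ∫ θ in (0 : ℝ)..(2 * π), dslope (rodPhase L b a) 0 (x * sin θ) := by
  have hx₀ : 0 < x := (by positivity : 0 < a / (2 * L)).trans_le hx.1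
  have hLx : L * x ≤ a := by rw [← le_div_iff₀' hL]; exact hx.2
  have haLx : a ≤ 2 * (L * x) := by
    have := hx.1; rw [div_le_iff₀ (by positivity)] at this; linarith
  have hbig : ∀ θ ∈ Icc (π / 6) (π / 2),
      (exp (b * a ^ 2 / 4) - 1) * (L / a) ≤ dslope (rodPhase L b a) 0 (x * sin θ) := by
    intro θ hθ
    have hsin_le : sin θ ≤ 1 := sin_le_one θ
    have hsin_ge : 1 / 2 ≤ sin θ := by
      rw [← sin_pi_div_six]
      exact sin_le_sin_of_le_of_le_pi_div_two (by linarith [pi_pos]) hθ.2 hθ.1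
    have hu : 0 < x * sin θ := by positivity
    refine le_trans ?_ (exp_sub_one_div_le_dslope_rodPhase hb hu (by nlinarith) (by nlinarith))
    have hinv : L / a ≤ 1 / (x * sin θ) := by rw [div_le_div_iff₀ ha hu]; nlinarith
    rw [div_eq_mul_one_div _ (x * sin θ)]
    exact mul_le_mul_of_nonneg_left hinv
      (by linarith [one_le_exp (by positivity : 0 ≤ b * a ^ 2 / 4)])
  have := le_integral_of_neg_le_of_le_on_Icc (p := 0) (q := 2 * π) (by positivity)
    (by linarith [pi_pos]) (by linarith [pi_pos])
    (intervalIntegrable_dslope_rodPhase_mul_sin x _ _)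
    (fun θ _ => neg_div_le_dslope_rodPhase hL.le hb ha (x * sin θ)) hbig
  refine le_trans (le_of_sub_nonneg ?_) this
  rw [show L / (2 * a) = L / a / 2 by ring]
  ring_nf
  positivity

end rodIntegral

theorem rodIntegral_pos {L b a δ : ℝ} (hL : 0 < L) (hδ : 0 < δ) (hδa : δ ≤ a) (haL : a ≤ L ^ 2)
    (hb : 6 * L ^ 2 / δ < exp (b * δ ^ 2 / 4) - 1) : 0 < rodIntegral L b a := by
  have ha : 0 < a := hδ.trans_le hδa
  have hb₀ : 0 ≤ b := by
    have : 0 < b * δ ^ 2 / 4 :=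
      one_lt_exp_iff.1 (by linarith [(by positivity : 0 < 6 * L ^ 2 / δ)])
    nlinarith [sq_nonneg δ]
  have hlarge : 6 * L ^ 2 / a < exp (b * a ^ 2 / 4) - 1 := by
    have h₁ : 6 * L ^ 2 / a ≤ 6 * L ^ 2 / δ := by gcongr
    have h₂ : exp (b * δ ^ 2 / 4) ≤ exp (b * a ^ 2 / 4) := by gcongr
    linarith
  have hH : Continuous fun x => ∫ θ in (0 : ℝ)..(2 * π), dslope (rodPhase L b a) 0 (x * sin θ) :=
    continuous_parametric_intervalIntegral_of_continuous'
      (f := fun x θ => dslope (rodPhase L b a) 0 (x * sin θ))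
      (continuous_dslope_rodPhase.comp (by fun_prop)) _ _
  have := le_integral_of_neg_le_of_le_on_Icc (p := 0) (q := L) (by positivity)
    (div_le_div_of_nonneg_left ha.le hL (by linarith)) (by rwa [div_le_iff₀ hL, ← sq])
    (hH.intervalIntegrable _ _) (fun x _ => neg_le_integral_dslope_rodPhase hL.le hb₀ ha x)
    (fun x hx => le_integral_dslope_rodPhase hL hb₀ ha hx)
  rw [rodIntegral_eq]
  refine lt_of_lt_of_le ?_ this
  have key : (a / L - a / (2 * L)) * (π / 3 * ((exp (b * a ^ 2 / 4) - 1) * (L / a)) - π * (L / a)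
      + π * (L / a)) - (L - 0) * (π * (L / a))
      = π / 6 * (exp (b * a ^ 2 / 4) - 1 - 6 * L ^ 2 / a) := by
    field_simp
    ring
  rw [key]
  exact mul_pos (by positivity) (sub_pos.2 hlarge)

theorem zeros_tend_to_zero (L : ℝ) (hL : 0 < L)
    (b : ℕ → ℝ) (hb : Tendsto b atTop atTop) (a : ℕ → ℝ)
    (ha : ∀ n, |a n| ≤ L ^ 2)
    (hzero : ∀ n,
      (∫ x in (0 : ℝ)..L, ∫ θ in (0 : ℝ)..(2 * π), rodIntegrand L (b n) (a n) x θ) = 0) :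
    Tendsto a atTop (nhds 0) := by
  refine Metric.tendsto_nhds.2 fun ε hε => ?_
  set δ := min ε (L ^ 2)
  have hδ : 0 < δ := lt_min hε (by positivity)
  have hexp : Tendsto (fun n => exp (b n * δ ^ 2 / 4)) atTop atTop :=
    tendsto_exp_atTop.comp ((hb.atTop_mul_const (by positivity)).atTop_div_const (by norm_num))
  filter_upwards [hexp.eventually_gt_atTop (6 * L ^ 2 / δ + 1)] with n hn
  rw [Real.dist_0_eq_abs]
  by_contra! hεa
  have habs : rodIntegral L (b n) |a n| = 0 := by
    rcases abs_choice (a n) with h | h <;> rw [h]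
    · exact hzero n
    · rw [rodIntegral_neg, rodIntegral, hzero n, neg_zero]
  exact (rodIntegral_pos hL hδ ((min_le_left _ _).trans hεa) (ha n) (by linarith)).ne' habs
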